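/- Let p be a prime number with p ≡ 2 (mod 5) or p ≡ 3 (mod 5), and let t ∈ F_p satisfy t ≠ 1 and t⁴ − t³ + t² − t + 1 ≠ 0. Then the number of quadruples (x, y, z, w) ∈ F_p⁴ with (x, y, z) ≠ (0, 0, 0) and w² = y·(x − 2(t−1)y − tz)·Q(x, y, z) equals (p − 1)(p² + p + 1). Equivalently, the double cover X'_t of P² given in the weighted projective space P(1,1,1,3) by w² = y(x − 2(t−1)y − tz)Q(x, y, z) has exactly p² + p + 1 F_p-rational points. -/

import Mathlib

/-!
In the coordinates `a = x + 2y`, `c = 2y + z` the equation reads `w² = (a - tc) · P(a, c, y)`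
with `P(a, c, y) = y · Q(a - 2y, y, c - 2y)`, and `125 · P(a, c, ·)` is, up to affine changes of
variable, the Dickson polynomial `D₅(·, b)` with `b = -(a² - 3ac + c²)`. Since
`D₅(u + v, uv) = u⁵ + v⁵` and `5` is prime to `p² - 1` when `p ≡ ±2 (mod 5)`, writing elements of
`F_p` as `u + v` with `uv = b` and `u, v ∈ F_{p²}` shows that `D₅(·, b)` permutes `F_p`. So every
fibre over `(a, c)` has exactly `p` points `(y, w)`, the affine equation has `p³` solutions, and
removing the origin leaves `p³ - 1 = (p - 1)(p² + p + 1)`.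
-/

/-- The quartic form `Q` from Example 1.6/6.2 of the paper. -/
def Qquartic {K : Type*} [CommRing K] (x y z : K) : K :=
  x ^ 4 + x ^ 3 * y - x ^ 3 * z + x ^ 2 * y ^ 2 - 2 * x ^ 2 * y * z + x ^ 2 * z ^ 2
    + x * y ^ 3 - 3 * x * y ^ 2 * z - 2 * x * y * z ^ 2 - x * z ^ 3
    + y ^ 4 + y ^ 3 * z + y ^ 2 * z ^ 2 + y * z ^ 3 + z ^ 4

open Polynomial Function

theorem Polynomial.dickson_one_eval_add {R : Type*} [CommRing R] (x y : R) :
    ∀ n, (dickson 1 (x * y) n).eval (x + y) = x ^ n + y ^ n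
  | 0 => by simp only [pow_zero, dickson_zero]; norm_num
  | 1 => by simp only [eval_X, dickson_one, pow_one]
  | n + 2 => by
    simp only [eval_sub, eval_mul, dickson_one_eval_add x y _, eval_X, dickson_add_two, eval_C]
    ring

theorem Polynomial.eval_dickson_one_five {R : Type*} [CommRing R] (a x : R) :
    (dickson 1 a 5).eval x = x ^ 5 - 5 * a * x ^ 3 + 5 * a ^ 2 * x := by
  simp only [dickson_add_two, Nat.reduceAdd, zero_add, dickson_one, dickson_zero, Nat.cast_one,
    eval_sub, eval_mul, eval_X, eval_C, eval_ofNat, eval_one]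
  ring

theorem pow_left_injective_of_coprime_card_units {F : Type*} [Field F] {n : ℕ} (hn : n ≠ 0)
    (h : (Nat.card Fˣ).Coprime n) : Injective (· ^ n : F → F) := by
  intro u v huv
  simp only at huv
  rcases eq_or_ne v 0 with rfl | hv
  · simpa [zero_pow hn, pow_eq_zero_iff hn] using huv
  have hu : u ≠ 0 := by rintro rfl; simp [zero_pow hn, eq_comm, pow_eq_zero_iff hn, hv] at huv
  have := h.pow_left_bijective.injective (a₁ := Units.mk0 u hu) (a₂ := Units.mk0 v hv)
    (Units.ext (by simpa using huv))
  simpa using congrArg Units.val this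

theorem add_eq_add_of_pow_add_pow_eq {L : Type*} [CommRing L] [IsDomain L] {n : ℕ}
    (hpow : Injective (· ^ n : L → L)) {u₁ v₁ u₂ v₂ : L} (hprod : u₁ * v₁ = u₂ * v₂)
    (hsum : u₁ ^ n + v₁ ^ n = u₂ ^ n + v₂ ^ n) : u₁ + v₁ = u₂ + v₂ := by
  have hprod' : u₁ ^ n * v₁ ^ n = u₂ ^ n * v₂ ^ n := by rw [← mul_pow, ← mul_pow, hprod]
  have key : (u₁ ^ n - u₂ ^ n) * (u₁ ^ n - v₂ ^ n) = 0 := by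
    linear_combination u₁ ^ n * hsum - hprod'
  rcases mul_eq_zero.mp key with h | h
  · have hu : u₁ = u₂ := hpow (sub_eq_zero.mp h)
    have hv : v₁ = v₂ := hpow (by linear_combination hsum - h)
    rw [hu, hv]
  · have hu : u₁ = v₂ := hpow (sub_eq_zero.mp h)
    have hv : v₁ = u₂ := hpow (by linear_combination hsum - h)
    rw [hu, hv, add_comm]

theorem Polynomial.dickson_one_eval_injective {K L : Type*} [Field K] [Field L] [Algebra K L]
    {n : ℕ} (hpow : Injective (· ^ n : L → L)) (b : K)
    (hroot : ∀ x : K, ∃ u : L, u ^ 2 - algebraMap K L x * u + algebraMap K L b = 0) :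
    Injective fun x : K => (dickson 1 b n).eval x := by
  have hsplit (x : K) : ∃ u v : L, u * v = algebraMap K L b ∧ u + v = algebraMap K L x := by
    obtain ⟨u, hu⟩ := hroot x
    exact ⟨u, algebraMap K L x - u, by linear_combination -hu, by ring⟩
  have hmap (x : K) : algebraMap K L ((dickson 1 b n).eval x)
      = (dickson 1 (algebraMap K L b) n).eval (algebraMap K L x) := by
    rw [← map_dickson, eval_map_algebraMap, aeval_algebraMap_apply, coe_aeval_eq_eval]
  intro x₁ x₂ h
  obtain ⟨u₁, v₁, hprod₁, hsum₁⟩ := hsplit x₁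
  obtain ⟨u₂, v₂, hprod₂, hsum₂⟩ := hsplit x₂
  apply (algebraMap K L).injective
  rw [← hsum₁, ← hsum₂]
  refine add_eq_add_of_pow_add_pow_eq hpow (hprod₁.trans hprod₂.symm) ?_
  rw [← dickson_one_eval_add, ← dickson_one_eval_add, hprod₁, hprod₂, hsum₁, hsum₂, ← hmap,
    ← hmap]
  exact congrArg _ h

theorem exists_aeval_eq_zero_of_natDegree_le_two {k L : Type*} [Field k] [Finite k] [Field L]
    [Algebra k L] (hL : ((X ^ Nat.card k ^ 2 - X : k[X]).map (algebraMap k L)).Splits)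
    {f : k[X]} (hf : 0 < f.natDegree) (hf2 : f.natDegree ≤ 2) : ∃ u : L, aeval u f = 0 := by
  have hf0 : f ≠ 0 := ne_zero_of_natDegree_gt hf
  obtain ⟨g, hg, hgf⟩ := WfDvdMonoid.exists_irreducible_factor
    (not_isUnit_of_natDegree_pos f hf) hf0
  have hdeg : g.natDegree ∣ 2 := by
    have h1 := hg.natDegree_pos
    have h2 := (natDegree_le_of_dvd hgf hf0).trans hf2
    interval_cases g.natDegree <;> norm_num
  have hgs : (g.map (algebraMap k L)).Splits :=
    hL.of_dvd (map_ne_zero (FiniteField.X_pow_card_pow_sub_X_ne_zero k two_ne_zero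
      Finite.one_lt_card))
    (Polynomial.map_dvd _ (hg.natDegree_dvd_iff_dvd_X_pow_card_pow_sub_X.mp hdeg))
  obtain ⟨u, hu⟩ := hgs.exists_eval_eq_zero
    (by rw [degree_map]; exact (degree_pos_of_irreducible hg).ne')
  obtain ⟨h, rfl⟩ := hgf
  exact ⟨u, by rw [map_mul, aeval_def, eval₂_eq_eval_map, hu, zero_mul]⟩

def lineQuintic {R : Type*} [CommRing R] (a c y : R) : R :=
  y * Qquartic (a - 2 * y) y (c - 2 * y)

theorem lineQuintic_eq_dickson {R : Type*} [CommRing R] (a c y : R) :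
    125 * lineQuintic a c y
      = (dickson 1 (-(a ^ 2 - 3 * a * c + c ^ 2)) 5).eval (5 * y - a - c)
        - (dickson 1 (-(a ^ 2 - 3 * a * c + c ^ 2)) 5).eval (-a - c) := by
  simp only [lineQuintic, Qquartic, eval_dickson_one_five]
  ring

section ZMod

variable {p : ℕ} [Fact p.Prime]

theorem GaloisField.exists_sq_sub_mul_add_eq_zero (x b : ZMod p) :
    ∃ u : GaloisField p 2, u ^ 2 - algebraMap _ _ x * u + algebraMap _ _ b = 0 := by
  have hL : ((X ^ Nat.card (ZMod p) ^ 2 - X : (ZMod p)[X]).map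
      (algebraMap (ZMod p) (GaloisField p 2))).Splits := by
    rw [Nat.card_zmod]
    exact SplittingField.splits _
  have hdeg : (X ^ 2 - C x * X + C b).natDegree = 2 := by compute_degree!
  obtain ⟨u, hu⟩ := exists_aeval_eq_zero_of_natDegree_le_two hL (f := X ^ 2 - C x * X + C b)
    (by omega) hdeg.le
  exact ⟨u, by simpa using hu⟩

theorem GaloisField.pow_five_injective (hp : p % 5 = 2 ∨ p % 5 = 3) :
    Injective (· ^ 5 : GaloisField p 2 → GaloisField p 2) := by
  refine pow_left_injective_of_coprime_card_units (by norm_num) ?_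
  have hsq : p ^ 2 % 5 = 4 := by rw [Nat.pow_mod]; rcases hp with h | h <;> rw [h]
  rw [Nat.card_units, GaloisField.card p 2 two_ne_zero, Nat.coprime_comm,
    Nat.Prime.coprime_iff_not_dvd (by norm_num)]
  omega

theorem ZMod.dickson_one_five_eval_injective (hp : p % 5 = 2 ∨ p % 5 = 3) (b : ZMod p) :
    Injective fun x : ZMod p => (dickson 1 b 5).eval x :=
  dickson_one_eval_injective (GaloisField.pow_five_injective hp) b
    (fun x => GaloisField.exists_sq_sub_mul_add_eq_zero x b)

theorem ZMod.five_ne_zero (hp : p % 5 = 2 ∨ p % 5 = 3) : (5 : ZMod p) ≠ 0 := by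
  intro h
  have hdvd := (ZMod.natCast_eq_zero_iff 5 p).mp (by exact_mod_cast h)
  have hle := Nat.le_of_dvd (by norm_num) hdvd
  interval_cases p <;> omega

theorem ZMod.lineQuintic_bijective (hp : p % 5 = 2 ∨ p % 5 = 3) (a c : ZMod p) :
    Bijective (lineQuintic a c) := by
  refine Finite.injective_iff_bijective.mp fun y₁ y₂ h => ?_
  have h125 := congrArg (125 * ·) h
  simp only [lineQuintic_eq_dickson, sub_left_inj] at h125
  have h5 := ZMod.dickson_one_five_eval_injective hp _ h125
  exact mul_left_cancel₀ (ZMod.five_ne_zero hp) (by linear_combination h5)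

end ZMod

theorem card_sq_eq_mul_of_bijective {K : Type*} [Field K] (c : K) {f : K → K}
    (hf : Bijective f) : Nat.card {r : K × K // r.2 ^ 2 = c * f r.1} = Nat.card K := by
  rcases eq_or_ne c 0 with rfl | hc
  · refine Nat.card_congr (Equiv.ofBijective (fun r => r.1.1) ⟨fun r s h => ?_, fun l => ?_⟩)
    · have hr : r.1.2 = 0 := by simpa using r.2
      have hs : s.1.2 = 0 := by simpa using s.2
      exact Subtype.ext (Prod.ext h (hr.trans hs.symm))
    · exact ⟨⟨(l, 0), by simp⟩, rfl⟩
  · refine Nat.card_congr (Equiv.ofBijective (fun r => r.1.2) ⟨fun r s h => ?_, fun w => ?_⟩)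
    · have hf' : f r.1.1 = f s.1.1 :=
        mul_left_cancel₀ hc (by rw [← r.2, ← s.2]; exact congrArg (· ^ 2) h)
      exact Subtype.ext (Prod.ext (hf.injective hf') h)
    · obtain ⟨l, hl⟩ := hf.surjective (c⁻¹ * w ^ 2)
      exact ⟨⟨(l, w), by rw [hl, mul_inv_cancel_left₀ hc]⟩, rfl⟩

theorem ncard_setOf_sq_eq_mul_Qquartic {K : Type*} [Field K] [Fintype K]
    (hQ : ∀ a c : K, Bijective (lineQuintic a c)) (t : K) :
    Set.ncard {q : K × K × K × K | q.2.2.2 ^ 2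
        = q.2.1 * (q.1 - 2 * (t - 1) * q.2.1 - t * q.2.2.1) * Qquartic q.1 q.2.1 q.2.2.1}
      = Nat.card K ^ 3 := by
  let e : K × K × K × K ≃ (K × K) × (K × K) :=
    { toFun := fun ⟨x, y, z, w⟩ => ((x + 2 * y, 2 * y + z), (y, w))
      invFun := fun ⟨(a, c), (y, w)⟩ => (a - 2 * y, y, c - 2 * y, w)
      left_inv := fun ⟨x, y, z, w⟩ => by simp
      right_inv := fun ⟨(a, c), (y, w)⟩ => by simp }
  have he (q : K × K × K × K) : q.2.2.2 ^ 2
        = q.2.1 * (q.1 - 2 * (t - 1) * q.2.1 - t * q.2.2.1) * Qquartic q.1 q.2.1 q.2.2.1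
      ↔ (e q).2.2 ^ 2
        = ((e q).1.1 - t * (e q).1.2) * lineQuintic (e q).1.1 (e q).1.2 (e q).2.1 := by
    obtain ⟨x, y, z, w⟩ := q
    simp only [e, Equiv.coe_fn_mk, lineQuintic, add_sub_cancel_right, add_sub_cancel_left]
    ring_nf
  rw [← Nat.card_coe_set_eq, Set.coe_ofPred, Nat.card_congr ((e.subtypeEquiv he).trans
    (Equiv.subtypeProdEquivSigmaSubtype fun (ac : K × K) (r : K × K) =>
      r.2 ^ 2 = (ac.1 - t * ac.2) * lineQuintic ac.1 ac.2 r.1)), Nat.card_sigma]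
  simp only [card_sq_eq_mul_of_bijective _ (hQ _ _), Finset.sum_const, Finset.card_univ,
    Fintype.card_prod, smul_eq_mul, Nat.card_eq_fintype_card]
  ring

theorem ncard_punctured_setOf_sq_eq {K : Type*} [CommRing K] [NoZeroDivisors K] [Finite K]
    (F : K → K → K → K) (hF : F 0 0 0 = 0) :
    Set.ncard {q : K × K × K × K |
        ¬(q.1 = 0 ∧ q.2.1 = 0 ∧ q.2.2.1 = 0) ∧ q.2.2.2 ^ 2 = F q.1 q.2.1 q.2.2.1}
      = Set.ncard {q : K × K × K × K | q.2.2.2 ^ 2 = F q.1 q.2.1 q.2.2.1} - 1 := by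
  have h0 : (0 : K × K × K × K) ∈ {q : K × K × K × K | q.2.2.2 ^ 2 = F q.1 q.2.1 q.2.2.1} := by
    simp [hF]
  rw [← Set.ncard_sdiff_singleton_of_mem h0]
  congr 1
  ext ⟨x, y, z, w⟩
  by_cases h : x = 0 ∧ y = 0 ∧ z = 0
  · obtain ⟨rfl, rfl, rfl⟩ := h
    simp [hF]
  · have hne : ((x, y, z, w) : K × K × K × K) ≠ 0 := fun h0 => h (by simp_all [Prod.ext_iff])
    simp only [Set.mem_ofPred_eq, Set.mem_sdiff, Set.mem_singleton_iff, h, hne,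
      not_false_eq_true, true_and, and_true]

theorem double_cover_point_count_general (p : ℕ) [Fact p.Prime] (hp : p % 5 = 2 ∨ p % 5 = 3)
    (t : ZMod p) :
    Set.ncard {q : ZMod p × ZMod p × ZMod p × ZMod p |
        ¬(q.1 = 0 ∧ q.2.1 = 0 ∧ q.2.2.1 = 0) ∧
        q.2.2.2 ^ 2
          = q.2.1 * (q.1 - 2 * (t - 1) * q.2.1 - t * q.2.2.1) * Qquartic q.1 q.2.1 q.2.2.1}
      = (p - 1) * (p ^ 2 + p + 1) := by
  have hp1 : 1 ≤ p := (Fact.out : p.Prime).one_le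
  rw [ncard_punctured_setOf_sq_eq
      (fun x y z => y * (x - 2 * (t - 1) * y - t * z) * Qquartic x y z) (by simp [Qquartic]),
    ncard_setOf_sq_eq_mul_Qquartic (K := ZMod p) (ZMod.lineQuintic_bijective hp) t,
    Nat.card_zmod]
  zify [hp1, Nat.one_le_pow 3 p hp1]
  ring

/-- **Lemma 6.4 (Qw5_count).** For a prime `p ≡ 2, 3 (mod 5)` and `t ∈ F_p` with `t ≠ 1` and
`t⁴ − t³ + t² − t + 1 ≠ 0`, the number of quadruples `(x, y, z, w) ∈ F_p⁴` with
`(x, y, z) ≠ (0,0,0)` and `w² = y·(x − 2(t−1)y − tz)·Q(x, y, z)` equals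
`(p − 1)(p² + p + 1)`; equivalently, the double cover `X'_t` of `P²` has exactly
`p² + p + 1` `F_p`-rational points. -/
theorem double_cover_point_count (p : ℕ) [Fact p.Prime] (hp : p % 5 = 2 ∨ p % 5 = 3)
    (t : ZMod p) (ht1 : t ≠ 1) (ht2 : t ^ 4 - t ^ 3 + t ^ 2 - t + 1 ≠ 0) :
    Set.ncard {q : ZMod p × ZMod p × ZMod p × ZMod p |
        ¬(q.1 = 0 ∧ q.2.1 = 0 ∧ q.2.2.1 = 0) ∧
        q.2.2.2 ^ 2
          = q.2.1 * (q.1 - 2 * (t - 1) * q.2.1 - t * q.2.2.1) * Qquartic q.1 q.2.1 q.2.2.1}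
      = (p - 1) * (p ^ 2 + p + 1) :=
  double_cover_point_count_general p hp t
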